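/- Let G = PSL₂(q) with q even. Then G contains exactly q² − 1 unipotent elements (elements of order 2), exactly ½·q(q+1)(q−2) semisimple split elements, and exactly ½·q²(q−1) semisimple non-split elements. -/

import Mathlib

/-!
In characteristic 2 the centre of `SL(2, F)` is trivial, so `PSL(2, F) = SL(2, F)`. By
Cayley–Hamilton an element `g` of trace `t` satisfies `g ^ 2 = t g + 1`, and `g` is classified by
the number of roots in `F` of `X ^ 2 - t X + 1`. There is one root exactly when `t = 0`, and that
is when `g ^ 2 = 1`. If there are two roots `a` and `a⁻¹`, then `g ^ (q - 1) = 1`. If there are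
none, the polynomial is irreducible, Frobenius swaps its two roots in `F_{q²}`, and
`g ^ (q + 1) = 1`. The elements of trace `t` correspond to the solutions of
`b c = a (t - a) - 1`, so there are `q (q - 1) + q r` of them, where `r` is the number of roots.
Every `a ≠ 0` is a root for exactly one trace, namely `a + a⁻¹`. Hence `(q - 2) / 2` nonzero
traces have two roots and `q / 2` have none.
-/

open Matrix Polynomial Finset
open scoped MatrixGroups

theorem mul_sub_eq_one_iff_eq_or_eq_sub {R : Type*} [CommRing R] [IsDomain R] {t a x : R}
    (ha : a * (t - a) = 1) : x * (t - x) = 1 ↔ x = a ∨ x = t - a := by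
  -- `x (t - x) - 1 = -(x - a) (x - (t - a))`
  rw [← sub_eq_zero, ← sub_eq_zero (a := x), ← sub_eq_zero (a := x) (b := t - a),
    ← mul_eq_zero]
  constructor <;> intro h <;> linear_combination -h + ha

theorem sum_ite_eq_else_one {α : Type*} [Fintype α] [DecidableEq α] (a : α) (c : ℕ) :
    ∑ b : α, (if b = a then c else 1) = c + (Fintype.card α - 1) := by
  rw [Fintype.sum_eq_add_sum_compl a, if_pos rfl,
    sum_congr rfl fun b hb => if_neg (by simpa using hb), sum_const, card_compl, card_singleton,
    smul_eq_mul, mul_one]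

theorem sq_ne_one_iff_ne_one_and_orderOf_ne_two {G : Type*} [Monoid G] {g : G} :
    g ^ 2 ≠ 1 ↔ g ≠ 1 ∧ orderOf g ≠ 2 := by
  rw [Ne, ← orderOf_dvd_iff_pow_eq_one, Nat.dvd_prime Nat.prime_two, orderOf_eq_one_iff]
  tauto

theorem sq_eq_one_of_pow_sub_one_eq_one_of_pow_add_one_eq_one {G : Type*} [Monoid G] {g : G}
    {n : ℕ} (hn : 1 ≤ n) (h₁ : g ^ (n - 1) = 1) (h₂ : g ^ (n + 1) = 1) : g ^ 2 = 1 := by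
  rwa [show n + 1 = n - 1 + 2 by omega, pow_add, h₁, one_mul] at h₂

section Polynomial

theorem aeval_X_sq_sub_C_mul_X_add_one_eq_zero_iff {R A : Type*} [CommRing R] [CommRing A]
    [Algebra R A] (t : R) (x : A) :
    aeval x (X ^ 2 - C t * X + 1 : R[X]) = 0 ↔ x * (algebraMap R A t - x) = 1 := by
  simp only [map_add, map_sub, map_mul, map_pow, aeval_X, aeval_C, map_one]
  constructor <;> intro hx <;> linear_combination -hx

theorem X_sq_sub_C_mul_X_add_one_eq {R : Type*} [CommRing R] {t a : R} (ha : a * (t - a) = 1) :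
    (X ^ 2 - C t * X + 1 : R[X]) = (X - C a) * (X - C (t - a)) := by
  have hC : C a * (C t - C a) = 1 := by rw [← C_sub, ← C_mul, ha, C_1]
  rw [C_sub]
  linear_combination -hC

theorem pow_eq_one_of_aeval_eq_zero_of_dvd {R A : Type*} [CommRing R] [Ring A] [Algebra R A]
    {x : A} {p : R[X]} {n : ℕ} (hx : aeval x p = 0) (hp : p ∣ X ^ n - 1) : x ^ n = 1 := by
  obtain ⟨r, hr⟩ := hp
  simpa [sub_eq_zero, hx] using congrArg (aeval x) hr

variable {F : Type*} [Field F] [Fintype F]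

local notation "q" => Fintype.card F

theorem X_sq_sub_C_mul_X_add_one_dvd_X_pow_card_sub_one_sub_one {t a : F}
    (ha : a * (t - a) = 1) (hne : a ≠ t - a) :
    (X ^ 2 - C t * X + 1 : F[X]) ∣ X ^ (q - 1) - 1 := by
  have hroot : ∀ b : F, b ≠ 0 → X - C b ∣ (X ^ (q - 1) - 1 : F[X]) := fun b hb => by
    simp [dvd_iff_isRoot, FiniteField.pow_card_sub_one_eq_one b hb]
  rw [X_sq_sub_C_mul_X_add_one_eq ha]
  exact (isCoprime_X_sub_C_of_isUnit_sub (sub_ne_zero_of_ne hne).isUnit).mul_dvd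
    (hroot a (left_ne_zero_of_mul_eq_one ha)) (hroot _ (right_ne_zero_of_mul_eq_one ha))

theorem AdjoinRoot.root_pow_card_ne_root {p : F[X]} [Fact (Irreducible p)]
    (hp : 2 ≤ p.natDegree) : AdjoinRoot.root p ^ q ≠ AdjoinRoot.root p := by
  intro h
  have hp0 : p ≠ 0 := Irreducible.ne_zero Fact.out
  have : Module.Finite F (AdjoinRoot p) := (AdjoinRoot.powerBasis hp0).finite
  have : Finite (AdjoinRoot p) := Module.finite_of_finite F
  have hfrob : FiniteField.frobeniusAlgHom F (AdjoinRoot p) = 1 := AdjoinRoot.algHom_ext h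
  have horder := FiniteField.orderOf_frobeniusAlgHom F (AdjoinRoot p)
  rw [hfrob, orderOf_one, (AdjoinRoot.powerBasis hp0).finrank, AdjoinRoot.powerBasis_dim] at horder
  omega

theorem X_sq_sub_C_mul_X_add_one_dvd_X_pow_card_add_one_sub_one {t : F}
    (h : ∀ a : F, a * (t - a) ≠ 1) :
    (X ^ 2 - C t * X + 1 : F[X]) ∣ X ^ (q + 1) - 1 := by
  have hdeg : (X ^ 2 - C t * X + 1 : F[X]).natDegree = 2 := by compute_degree!
  have hirr : Irreducible (X ^ 2 - C t * X + 1 : F[X]) :=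
    irreducible_of_degree_le_three_of_not_isRoot (by simp [hdeg]) fun a ha => h a <| by
      rwa [IsRoot, ← coe_aeval_eq_eval, aeval_X_sq_sub_C_mul_X_add_one_eq_zero_iff] at ha
  have : Fact (Irreducible (X ^ 2 - C t * X + 1 : F[X])) := ⟨hirr⟩
  set μ := AdjoinRoot.root (X ^ 2 - C t * X + 1 : F[X])
  have hμ : aeval μ (X ^ 2 - C t * X + 1 : F[X]) = 0 := by
    rw [AdjoinRoot.aeval_eq, AdjoinRoot.mk_self]
  have hμq : aeval (μ ^ q) (X ^ 2 - C t * X + 1 : F[X]) = 0 := by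
    change aeval (FiniteField.frobeniusAlgHom F _ μ) _ = 0
    rw [aeval_algHom_apply, hμ, map_zero]
  rw [aeval_X_sq_sub_C_mul_X_add_one_eq_zero_iff] at hμ hμq
  -- Frobenius moves `μ`, so it sends `μ` to the other root and `μ ^ (q + 1) = μ (t - μ) = 1`.
  have hμq' : μ ^ q = algebraMap F _ t - μ :=
    ((mul_sub_eq_one_iff_eq_or_eq_sub hμ).mp hμq).resolve_left
      (AdjoinRoot.root_pow_card_ne_root (by rw [hdeg]))
  rw [← AdjoinRoot.mk_eq_zero, ← AdjoinRoot.aeval_eq, map_sub, map_pow, aeval_X, map_one,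
    sub_eq_zero, pow_succ μ q, hμq']
  linear_combination hμ

end Polynomial

section RootsOfTrace

variable {F : Type*} [Field F] [Fintype F] [DecidableEq F]

local notation "q" => Fintype.card F

theorem card_filter_mul_eq (s : F) :
    #{x : F × F | x.1 * x.2 = s} = (if s = 0 then q else 0) + (q - 1) := by
  have hfiber (b : F) : #{c : F | b * c = s} = if b = 0 then (if s = 0 then q else 0) else 1 := by
    split_ifs with hb hs
    · simp [hb, hs]
    · simp [hb, Ne.symm hs]
    · rw [card_eq_one]
      exact ⟨s / b, by ext c; simp [eq_div_iff hb, mul_comm]⟩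
  rw [card_filter, Fintype.sum_prod_type]
  simp only [← card_filter, hfiber, sum_ite_eq_else_one]

/-- The roots of `X ^ 2 - t X + 1`, the characteristic polynomial of the elements of `SL(2, F)`
of trace `t`. -/
def rootsOfTrace (t : F) : Finset F := {a | a * (t - a) = 1}

theorem mem_rootsOfTrace {t a : F} : a ∈ rootsOfTrace t ↔ a * (t - a) = 1 := by
  simp [rootsOfTrace]

theorem card_rootsOfTrace_le_two (t : F) : #(rootsOfTrace t) ≤ 2 := by
  rcases (rootsOfTrace t).eq_empty_or_nonempty with h | ⟨a, ha⟩
  · simp [h]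
  · refine (card_le_card fun x hx => ?_).trans (card_le_two (a := a) (b := t - a))
    rw [mem_rootsOfTrace] at ha hx
    simpa using (mul_sub_eq_one_iff_eq_or_eq_sub ha).mp hx

theorem card_rootsOfTrace_eq_two_iff {t : F} :
    #(rootsOfTrace t) = 2 ↔ ∃ a, a * (t - a) = 1 ∧ a ≠ t - a := by
  constructor
  · intro h
    obtain ⟨a, b, hab, hs⟩ := card_eq_two.mp h
    have ha := mem_rootsOfTrace.mp (hs ▸ mem_insert_self a {b})
    have hb := (mul_sub_eq_one_iff_eq_or_eq_sub ha).mp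
      (mem_rootsOfTrace.mp (hs ▸ mem_insert_of_mem (mem_singleton_self b)))
    exact ⟨a, ha, fun h' => hab (hb.resolve_left hab.symm ▸ h')⟩
  · rintro ⟨a, ha, hne⟩
    rw [← card_pair hne]
    congr 1
    ext x
    rw [mem_rootsOfTrace, mul_sub_eq_one_iff_eq_or_eq_sub ha, mem_insert, mem_singleton]

theorem sum_card_rootsOfTrace : ∑ t : F, #(rootsOfTrace t) = q - 1 := by
  have hfiber (a : F) : #{t : F | a * (t - a) = 1} = if a = 0 then 0 else 1 := by
    split_ifs with ha
    · simp [ha]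
    · rw [card_eq_one]
      refine ⟨a + a⁻¹, ?_⟩
      ext t
      simp only [mem_filter, mem_univ, true_and, mem_singleton]
      constructor
      · intro h; field_simp; linear_combination h
      · rintro rfl; field_simp; ring
  simp only [rootsOfTrace, card_filter]
  rw [sum_comm]
  simp only [← card_filter, hfiber, sum_ite_eq_else_one, zero_add]

variable [CharP F 2]

theorem rootsOfTrace_zero : rootsOfTrace (0 : F) = {1} := by
  have h1 : (1 : F) * (0 - 1) = 1 := by simp [CharTwo.neg_eq]
  ext x
  rw [mem_rootsOfTrace, mul_sub_eq_one_iff_eq_or_eq_sub h1, zero_sub, CharTwo.neg_eq, or_self,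
    mem_singleton]

theorem card_rootsOfTrace_eq_one_iff {t : F} : #(rootsOfTrace t) = 1 ↔ t = 0 := by
  refine ⟨fun h => ?_, fun ht => by rw [ht, rootsOfTrace_zero, card_singleton]⟩
  by_contra ht
  obtain ⟨a, ha⟩ := card_pos.mp (h ▸ one_pos)
  rw [mem_rootsOfTrace] at ha
  have hne : a ≠ t - a := fun h' =>
    ht (by linear_combination -h' + a * (CharTwo.two_eq_zero : (2 : F) = 0))
  simp [card_rootsOfTrace_eq_two_iff.mpr ⟨a, ha, hne⟩] at h

theorem filter_card_rootsOfTrace_eq_one : ({t : F | #(rootsOfTrace t) = 1} : Finset F) = {0} := by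
  ext t
  simp [card_rootsOfTrace_eq_one_iff]

theorem two_mul_card_filter_card_rootsOfTrace :
    2 * #{t : F | #(rootsOfTrace t) = 2} + 2 = q ∧ 2 * #{t : F | #(rootsOfTrace t) = 0} = q := by
  have hmaps : ∀ t ∈ (univ : Finset F), #(rootsOfTrace t) ∈ range 3 := fun t _ =>
    mem_range.mpr (Nat.lt_succ_of_le (card_rootsOfTrace_le_two t))
  have hsum := sum_fiberwise_of_maps_to hmaps (fun t => #(rootsOfTrace t))
  have hcard := card_eq_sum_card_fiberwise (s := univ) hmaps
  have hfiber (k : ℕ) : ∑ t ∈ {t : F | #(rootsOfTrace t) = k}, #(rootsOfTrace t) =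
      #{t : F | #(rootsOfTrace t) = k} * k := sum_const_nat fun t ht => (mem_filter.mp ht).2
  simp only [sum_range_succ, range_zero, sum_empty, zero_add, hfiber, sum_card_rootsOfTrace,
    filter_card_rootsOfTrace_eq_one, card_singleton, card_univ] at hsum hcard
  omega

end RootsOfTrace

namespace Matrix

variable {R : Type*} [CommRing R] {M : Matrix (Fin 2) (Fin 2) R}

theorem aeval_X_sq_sub_C_trace_mul_X_add_one [Nontrivial R] (hM : M.det = 1) :
    aeval M (X ^ 2 - C M.trace * X + 1) = 0 := by
  simpa [charpoly_fin_two, hM] using aeval_self_charpoly M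

theorem sq_eq_one_iff_trace_eq_zero [CharP R 2] (hM : M.det = 1) : M ^ 2 = 1 ↔ M.trace = 0 := by
  have : Nontrivial R := CharP.nontrivial_of_char_ne_one (by norm_num : 2 ≠ 1)
  have hCH := aeval_X_sq_sub_C_trace_mul_X_add_one hM
  simp only [map_add, map_sub, map_mul, map_pow, aeval_X, aeval_C, map_one,
    Algebra.algebraMap_eq_smul_one, smul_one_mul] at hCH
  constructor
  · intro hsq
    rw [hsq, sub_add_eq_add_sub, one_add_one_eq_two,
      (CharTwo.two_eq_zero : (2 : Matrix (Fin 2) (Fin 2) R) = 0), zero_sub, neg_eq_zero] at hCH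
    have hscalar : M.trace • (1 : Matrix (Fin 2) (Fin 2) R) = 0 := by
      rw [← hsq, sq, ← smul_mul_assoc, hCH, zero_mul]
    simpa using congrFun₂ hscalar 0 0
  · intro ht
    rwa [ht, zero_smul, sub_zero, add_eq_zero_iff_eq_neg, CharTwo.neg_eq] at hCH

end Matrix

namespace Matrix.SpecialLinearGroup

theorem pow_eq_one_iff_coe_pow_eq_one {n R : Type*} [Fintype n] [DecidableEq n] [CommRing R]
    (g : SpecialLinearGroup n R) (k : ℕ) : g ^ k = 1 ↔ (g : Matrix n n R) ^ k = 1 := by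
  rw [← Matrix.SpecialLinearGroup.coe_pow, ← Matrix.SpecialLinearGroup.coe_one]
  exact Subtype.coe_inj.symm

section CharTwo

variable {R : Type*} [CommRing R] [CharP R 2]

theorem sq_eq_one_iff_trace_eq_zero (g : SL(2, R)) :
    g ^ 2 = 1 ↔ trace (g : Matrix (Fin 2) (Fin 2) R) = 0 := by
  rw [pow_eq_one_iff_coe_pow_eq_one]
  exact Matrix.sq_eq_one_iff_trace_eq_zero g.2

theorem center_eq_bot_of_charTwo [IsReduced R] : Subgroup.center SL(2, R) = ⊥ := by
  refine eq_bot_iff.mpr fun A hA => ?_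
  obtain ⟨r, hr, hrA⟩ := mem_center_iff.mp hA
  rw [Fintype.card_fin] at hr
  have hr1 : r = 1 := by
    have : (r - 1) ^ 2 = 0 := by
      linear_combination hr + (1 - r) * (CharTwo.two_eq_zero : (2 : R) = 0)
    exact sub_eq_zero.mp (IsNilpotent.eq_zero ⟨2, this⟩)
  rw [Subgroup.mem_bot]
  exact Subtype.ext (hrA.symm.trans (by rw [hr1, map_one]; rfl))

noncomputable def mulEquivPSLOfCharTwo [IsReduced R] : SL(2, R) ≃* PSL(2, R) :=
  ((QuotientGroup.quotientMulEquivOfEq center_eq_bot_of_charTwo).trans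
    QuotientGroup.quotientBot).symm

end CharTwo

section FiniteField

variable {F : Type*} [Field F] [Fintype F] [DecidableEq F]

local notation "q" => Fintype.card F

local notation:1024 "↑ₘ" A:1024 => ((A : SL(2, F)) : Matrix (Fin 2) (Fin 2) F)

theorem card_filter_trace_eq (t : F) :
    #{g : SL(2, F) | trace ↑ₘg = t} = q * #(rootsOfTrace t) + q * (q - 1) := by
  have hbij : #{g : SL(2, F) | trace ↑ₘg = t} =
      #{x : F × F × F | x.2.1 * x.2.2 = x.1 * (t - x.1) - 1} := by
    refine card_bij' (fun g _ => (g 0 0, g 0 1, g 1 0))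
      (fun x hx => (⟨!![x.1, x.2.1; x.2.2, t - x.1], by
        rw [mem_filter] at hx
        rw [det_fin_two_of, hx.2]; ring⟩ : SL(2, F))) ?_ ?_ ?_ fun _ _ => rfl
    · intro g hg
      obtain ⟨-, rfl⟩ := mem_filter.mp hg
      have hdet := g.2
      rw [det_fin_two] at hdet
      simp only [mem_filter, mem_univ, true_and, trace_fin_two]
      linear_combination -hdet
    · intro x _
      refine mem_filter.mpr ⟨mem_univ _, ?_⟩
      change trace !![x.1, x.2.1; x.2.2, t - x.1] = t
      rw [trace_fin_two_of]
      ring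
    · intro g hg
      obtain ⟨-, rfl⟩ := mem_filter.mp hg
      ext i j
      fin_cases i <;> fin_cases j <;> simp [trace_fin_two]
  rw [hbij, card_filter, Fintype.sum_prod_type]
  simp only [← card_filter, card_filter_mul_eq, sub_eq_zero, sum_add_distrib, sum_const,
    card_univ, smul_eq_mul]
  rw [← sum_filter, sum_const, smul_eq_mul, mul_comm]
  rfl

theorem ncard_setOf_card_rootsOfTrace_trace_eq (k : ℕ) :
    {g : SL(2, F) | #(rootsOfTrace (trace ↑ₘg)) = k}.ncard =
      #{t : F | #(rootsOfTrace t) = k} * (q * k + q * (q - 1)) := by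
  rw [← coe_filter_univ, Set.ncard_coe_finset,
    card_eq_sum_card_fiberwise (f := fun g : SL(2, F) => trace ↑ₘg)
      (t := {t : F | #(rootsOfTrace t) = k}) fun g hg => by simpa using hg]
  refine sum_const_nat fun t ht => ?_
  rw [mem_filter] at ht
  rw [filter_filter, ← ht.2, ← card_filter_trace_eq]
  congr 1
  ext g
  simp only [mem_filter, mem_univ, true_and, and_iff_right_iff_imp]
  rintro rfl
  rfl

theorem pow_card_sub_one_eq_one (g : SL(2, F)) (hg : #(rootsOfTrace (trace ↑ₘg)) = 2) :
    g ^ (q - 1) = 1 := by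
  obtain ⟨a, ha, hne⟩ := card_rootsOfTrace_eq_two_iff.mp hg
  rw [pow_eq_one_iff_coe_pow_eq_one]
  exact pow_eq_one_of_aeval_eq_zero_of_dvd (aeval_X_sq_sub_C_trace_mul_X_add_one g.2)
    (X_sq_sub_C_mul_X_add_one_dvd_X_pow_card_sub_one_sub_one ha hne)

theorem pow_card_add_one_eq_one (g : SL(2, F)) (hg : #(rootsOfTrace (trace ↑ₘg)) = 0) :
    g ^ (q + 1) = 1 := by
  rw [pow_eq_one_iff_coe_pow_eq_one]
  refine pow_eq_one_of_aeval_eq_zero_of_dvd (aeval_X_sq_sub_C_trace_mul_X_add_one g.2)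
    (X_sq_sub_C_mul_X_add_one_dvd_X_pow_card_add_one_sub_one fun a ha => ?_)
  rw [card_eq_zero, eq_empty_iff_forall_notMem] at hg
  exact hg a (mem_rootsOfTrace.mpr ha)

variable [CharP F 2]

theorem sq_eq_one_iff_card_rootsOfTrace_eq_one (g : SL(2, F)) :
    g ^ 2 = 1 ↔ #(rootsOfTrace (trace ↑ₘg)) = 1 := by
  rw [sq_eq_one_iff_trace_eq_zero, card_rootsOfTrace_eq_one_iff]

theorem sq_ne_one_and_pow_card_sub_one_eq_one_iff (g : SL(2, F)) :
    g ^ 2 ≠ 1 ∧ g ^ (q - 1) = 1 ↔ #(rootsOfTrace (trace ↑ₘg)) = 2 := by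
  have hle := card_rootsOfTrace_le_two (trace ↑ₘg)
  rw [Ne, sq_eq_one_iff_card_rootsOfTrace_eq_one]
  refine ⟨fun ⟨h1, h⟩ => ?_, fun h2 => ⟨by omega, pow_card_sub_one_eq_one g h2⟩⟩
  by_contra h2
  have h0 : #(rootsOfTrace (trace ↑ₘg)) = 0 := by omega
  exact h1 ((sq_eq_one_iff_card_rootsOfTrace_eq_one g).mp
    (sq_eq_one_of_pow_sub_one_eq_one_of_pow_add_one_eq_one Fintype.card_pos h
      (pow_card_add_one_eq_one g h0)))

theorem sq_ne_one_and_pow_card_add_one_eq_one_iff (g : SL(2, F)) :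
    g ^ 2 ≠ 1 ∧ g ^ (q + 1) = 1 ↔ #(rootsOfTrace (trace ↑ₘg)) = 0 := by
  have hle := card_rootsOfTrace_le_two (trace ↑ₘg)
  rw [Ne, sq_eq_one_iff_card_rootsOfTrace_eq_one]
  refine ⟨fun ⟨h1, h⟩ => ?_, fun h0 => ⟨by omega, pow_card_add_one_eq_one g h0⟩⟩
  by_contra h0
  have h2 : #(rootsOfTrace (trace ↑ₘg)) = 2 := by omega
  exact h1 ((sq_eq_one_iff_card_rootsOfTrace_eq_one g).mp
    (sq_eq_one_of_pow_sub_one_eq_one_of_pow_add_one_eq_one Fintype.card_pos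
      (pow_card_sub_one_eq_one g h2) h))

theorem ncard_setOf_orderOf_eq_two : {g : SL(2, F) | orderOf g = 2}.ncard = q ^ 2 - 1 := by
  have hset : {g : SL(2, F) | orderOf g = 2} =
      {g : SL(2, F) | #(rootsOfTrace (trace ↑ₘg)) = 1} \ {1} := by
    ext g
    simp [orderOf_eq_prime_iff, sq_eq_one_iff_card_rootsOfTrace_eq_one]
  have hone : (1 : SL(2, F)) ∈ {g : SL(2, F) | #(rootsOfTrace (trace ↑ₘg)) = 1} :=
    (sq_eq_one_iff_card_rootsOfTrace_eq_one 1).mp (one_pow 2)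
  have hq : 1 ≤ q := Fintype.card_pos
  rw [hset, Set.ncard_sdiff_singleton_of_mem hone, ncard_setOf_card_rootsOfTrace_trace_eq,
    filter_card_rootsOfTrace_eq_one, card_singleton, one_mul, mul_one, ← mul_one_add,
    Nat.add_sub_cancel' hq, sq]

theorem ncard_setOf_orderOf_dvd_card_sub_one :
    {g : SL(2, F) | g ≠ 1 ∧ orderOf g ≠ 2 ∧ orderOf g ∣ q - 1}.ncard =
      q * (q + 1) * (q - 2) / 2 := by
  simp_rw [← and_assoc, ← sq_ne_one_iff_ne_one_and_orderOf_ne_two, orderOf_dvd_iff_pow_eq_one,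
    sq_ne_one_and_pow_card_sub_one_eq_one_iff, ncard_setOf_card_rootsOfTrace_trace_eq]
  rw [← (two_mul_card_filter_card_rootsOfTrace (F := F)).1]
  generalize #{t : F | #(rootsOfTrace t) = 2} = c
  rw [show 2 * c + 2 - 1 = 2 * c + 1 by omega, show 2 * c + 2 - 2 = 2 * c by omega]
  exact (Nat.div_eq_of_eq_mul_left two_pos (by ring)).symm

theorem ncard_setOf_orderOf_dvd_card_add_one :
    {g : SL(2, F) | g ≠ 1 ∧ orderOf g ≠ 2 ∧ orderOf g ∣ q + 1}.ncard =
      q ^ 2 * (q - 1) / 2 := by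
  simp_rw [← and_assoc, ← sq_ne_one_iff_ne_one_and_orderOf_ne_two, orderOf_dvd_iff_pow_eq_one,
    sq_ne_one_and_pow_card_add_one_eq_one_iff, ncard_setOf_card_rootsOfTrace_trace_eq]
  rw [← (two_mul_card_filter_card_rootsOfTrace (F := F)).2]
  exact (Nat.div_eq_of_eq_mul_left two_pos (by ring)).symm

end FiniteField

end Matrix.SpecialLinearGroup

theorem psl2_even_count_elements_general
    {F : Type*} [Field F] [Fintype F] [CharP F 2] :
    {g : PSL(2, F) | orderOf g = 2}.ncard = Fintype.card F ^ 2 - 1 ∧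
    {g : PSL(2, F) | g ≠ 1 ∧ orderOf g ≠ 2 ∧ orderOf g ∣ Fintype.card F - 1}.ncard =
      Fintype.card F * (Fintype.card F + 1) * (Fintype.card F - 2) / 2 ∧
    {g : PSL(2, F) | g ≠ 1 ∧ orderOf g ≠ 2 ∧ orderOf g ∣ Fintype.card F + 1}.ncard =
      Fintype.card F ^ 2 * (Fintype.card F - 1) / 2 := by
  classical
  let e : SL(2, F) ≃* PSL(2, F) := SpecialLinearGroup.mulEquivPSLOfCharTwo
  have ncard_eq (P : PSL(2, F) → Prop) : {x | P x}.ncard = {g | P (e g)}.ncard :=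
    (Set.ncard_preimage_of_injective_subset_range e.injective
      (e.surjective.range_eq ▸ Set.subset_univ _)).symm
  simp only [ncard_eq, e.orderOf_eq, ne_eq, EmbeddingLike.map_eq_one_iff]
  exact ⟨SpecialLinearGroup.ncard_setOf_orderOf_eq_two,
    SpecialLinearGroup.ncard_setOf_orderOf_dvd_card_sub_one,
    SpecialLinearGroup.ncard_setOf_orderOf_dvd_card_add_one⟩

/-- For `G = PSL₂(q)`, `q` even: `G` has exactly `q² - 1` unipotent elements
(elements of order 2), `q(q+1)(q-2)/2` semisimple split elements, and `q²(q-1)/2`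
semisimple non-split elements. -/
theorem psl2_even_count_elements
    {F : Type*} [Field F] [Fintype F] [DecidableEq F] [CharP F 2] :
    {g : PSL(2, F) | orderOf g = 2}.ncard = Fintype.card F ^ 2 - 1 ∧
    {g : PSL(2, F) | g ≠ 1 ∧ orderOf g ≠ 2 ∧ orderOf g ∣ Fintype.card F - 1}.ncard =
      Fintype.card F * (Fintype.card F + 1) * (Fintype.card F - 2) / 2 ∧
    {g : PSL(2, F) | g ≠ 1 ∧ orderOf g ≠ 2 ∧ orderOf g ∣ Fintype.card F + 1}.ncard =
      Fintype.card F ^ 2 * (Fintype.card F - 1) / 2 :=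
  psl2_even_count_elements_general
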